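/- arXiv:1502.05993 — 4 statements merged into one kernel-verified Lean document; each statement's English description precedes it below -/
import Mathlib

section
/- Let h, μ, p : ℝ → ℝ with h continuously differentiable and h(x) > 0 for all x, μ(x) > 0 for all x, p differentiable, and let U⁰, Uʰ ∈ ℝ. Suppose u : ℝ × ℝ → ℝ is such that for each x, u(x,y) = U⁰ + (Uʰ − U⁰)·y/h(x) + p′(x)·y(y − h(x))/(2μ(x)), and suppose the flux x ↦ ∫₀^{h(x)} u(x,y) dy is constant in x. Then the function x ↦ h(x)³ p′(x)/(12 μ(x)) is differentiable and satisfies d/dx [ h³ p′ / (12μ) ] = (h′/2)(U⁰ + Uʰ). -/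
/-!
The flux of the Couette–Poiseuille profile across a film of thickness `h` is
`(U⁰ + Uʰ) h / 2 - h³ p' / (12 μ)`. Constancy of the flux therefore makes `h³ p' / (12 μ)` an
affine function of `h`, whose derivative is read off from that of `h`.
-/

open intervalIntegral

theorem integral_couette_poiseuille {H M : ℝ} (hH : H ≠ 0) (hM : M ≠ 0) (U0 Uh G : ℝ) :
    ∫ y in (0:ℝ)..H, (U0 + (Uh - U0) * y / H + G * (y * (y - H)) / (2 * M))
      = (U0 + Uh) / 2 * H - H ^ 3 * G / (12 * M) := by
  have hF : ∀ y ∈ Set.uIcc 0 H, HasDerivAt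
      (fun y => U0 * y + (Uh - U0) / H * (y ^ 2 / 2) + G / (2 * M) * (y ^ 3 / 3 - H * (y ^ 2 / 2)))
      (U0 + (Uh - U0) * y / H + G * (y * (y - H)) / (2 * M)) y := by
    intro y _
    have h2 : HasDerivAt (fun y : ℝ => y ^ 2 / 2) y y := by
      simpa using (hasDerivAt_pow 2 y).div_const 2
    have h3 : HasDerivAt (fun y : ℝ => y ^ 3 / 3) (y ^ 2) y := by
      simpa using (hasDerivAt_pow 3 y).div_const 3
    refine ((((hasDerivAt_id' y).const_mul U0).add (h2.const_mul ((Uh - U0) / H))).add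
      ((h3.sub (h2.const_mul H)).const_mul (G / (2 * M)))).congr_deriv ?_
    ring
  rw [integral_eq_sub_of_hasDerivAt hF (by apply Continuous.intervalIntegrable; fun_prop)]
  field_simp
  ring

theorem classical_reynolds_equation_general
    (h μ p : ℝ → ℝ) (hh : ContDiff ℝ 1 h) (hpos : ∀ x, 0 < h x)
    (hμpos : ∀ x, 0 < μ x) (U0 Uh : ℝ)
    (u : ℝ → ℝ → ℝ)
    (hu : ∀ x y, u x y = U0 + (Uh - U0) * y / h x + deriv p x * (y * (y - h x)) / (2 * μ x))
    (hflux : ∀ x₁ x₂, (∫ y in (0:ℝ)..h x₁, u x₁ y) = ∫ y in (0:ℝ)..h x₂, u x₂ y) :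
    ∀ x, HasDerivAt (fun x => h x ^ 3 * deriv p x / (12 * μ x))
      (deriv h x / 2 * (U0 + Uh)) x := by
  have flux_eq : ∀ x, ∫ y in (0:ℝ)..h x, u x y
      = (U0 + Uh) / 2 * h x - h x ^ 3 * deriv p x / (12 * μ x) := fun x => by
    simp only [hu]
    exact integral_couette_poiseuille (hpos x).ne' (hμpos x).ne' U0 Uh (deriv p x)
  have affine_in_h : (fun x => h x ^ 3 * deriv p x / (12 * μ x))
      = fun x => (U0 + Uh) / 2 * h x - ∫ y in (0:ℝ)..h 0, u 0 y := by
    funext x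
    rw [← hflux x 0, flux_eq]
    ring
  intro x
  rw [affine_in_h]
  exact (((hh.differentiable one_ne_zero x).hasDerivAt.const_mul _).sub_const _).congr_deriv
    (by ring)

/-- The classical Reynolds equation: if `u` is the Couette–Poiseuille profile
`u x y = U⁰ + (Uʰ − U⁰) y / h x + p' x · y (y − h x) / (2 μ x)` and the flux
`x ↦ ∫₀^{h x} u x y dy` is constant, then
`d/dx [ h³ p' / (12 μ) ] = (h'/2)(U⁰ + Uʰ)`. -/
theorem classical_reynolds_equation
    (h μ p : ℝ → ℝ) (hh : ContDiff ℝ 1 h) (hpos : ∀ x, 0 < h x)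
    (hμpos : ∀ x, 0 < μ x) (hp : Differentiable ℝ p) (U0 Uh : ℝ)
    (u : ℝ → ℝ → ℝ)
    (hu : ∀ x y, u x y = U0 + (Uh - U0) * y / h x + deriv p x * (y * (y - h x)) / (2 * μ x))
    (hflux : ∀ x₁ x₂, (∫ y in (0:ℝ)..h x₁, u x₁ y) = ∫ y in (0:ℝ)..h x₂, u x₂ y) :
    ∀ x, HasDerivAt (fun x => h x ^ 3 * deriv p x / (12 * μ x))
      (deriv h x / 2 * (U0 + Uh)) x :=
  classical_reynolds_equation_general h μ p hh hpos hμpos U0 Uh u hu hflux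
end

section
/- Let h > 0, μ > 0, and 𝒜, G, U⁰, Uʰ ∈ ℝ. Suppose u : [0,h] → ℝ is twice continuously differentiable and satisfies μ u″(y) + 𝒜²μ²G·(u′(y))² = G for all y ∈ [0,h], with u(0) = U⁰ and u(h) = Uʰ. Then 2μ ∫₀ʰ u(y) dy − μ h (U⁰ + Uʰ) + 𝒜²μ² G ∫₀ʰ y(y − h)(u′(y))² dy = −G h³ / 6. -/
/-!
Multiply the equation by the weight `w y = y * (y - h)`, which vanishes at both walls and has
`w'' = 2`, and integrate over `[0, h]`. Two integrations by parts turn `∫ w u''` into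
`2 ∫ u - h (U⁰ + Uʰ)`, and the right-hand side becomes `G ∫ w = -G h³ / 6`.
-/

open Set intervalIntegral MeasureTheory
open scoped Interval

theorem integral_sub_mul_sub_mul_of_hasDerivWithinAt {a b : ℝ} {u u' u'' : ℝ → ℝ}
    (hu : ∀ x ∈ [[a, b]], HasDerivWithinAt u (u' x) [[a, b]] x)
    (hu' : ∀ x ∈ [[a, b]], HasDerivWithinAt u' (u'' x) [[a, b]] x)
    (hu'' : IntervalIntegrable u'' volume a b) :
    ∫ x in a..b, (x - a) * (x - b) * u'' x = 2 * (∫ x in a..b, u x) - (b - a) * (u a + u b) := by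
  have hw : ∀ x ∈ [[a, b]],
      HasDerivWithinAt (fun x => (x - a) * (x - b)) (2 * x - a - b) [[a, b]] x := fun x _ =>
    (((hasDerivAt_id' x).sub_const a).mul ((hasDerivAt_id' x).sub_const b)).hasDerivWithinAt
      |>.congr_deriv (by ring)
  have hw' : ∀ x ∈ [[a, b]], HasDerivWithinAt (fun x => 2 * x - a - b) 2 [[a, b]] x := fun x _ =>
    ((((hasDerivAt_id' x).const_mul 2).sub_const a).sub_const b).hasDerivWithinAt
      |>.congr_deriv (mul_one 2)
  have hu_int : IntervalIntegrable u volume a b :=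
    ContinuousOn.intervalIntegrable fun x hx => (hu x hx).continuousWithinAt
  have hu'_int : IntervalIntegrable u' volume a b :=
    ContinuousOn.intervalIntegrable fun x hx => (hu' x hx).continuousWithinAt
  rw [integral_mul_deriv_eq_deriv_mul_of_hasDerivWithinAt hw hu'
      (Continuous.intervalIntegrable (by fun_prop) _ _) hu'',
    integral_mul_deriv_eq_deriv_mul_of_hasDerivWithinAt hw' hu
      (Continuous.intervalIntegrable (by fun_prop) _ _) hu'_int,
    intervalIntegral.integral_const_mul]
  ring

theorem integral_sub_mul_sub (a b : ℝ) : ∫ x in a..b, (x - a) * (x - b) = -(b - a) ^ 3 / 6 := by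
  have hF : ∀ x ∈ [[a, b]], HasDerivAt (fun x => (x - a) ^ 2 * (x - b) / 2 - (x - a) ^ 3 / 6)
      ((x - a) * (x - b)) x := fun x _ =>
    ((((hasDerivAt_id' x).sub_const a).pow 2).mul ((hasDerivAt_id' x).sub_const b)
      |>.div_const 2 |>.sub (((hasDerivAt_id' x).sub_const a).pow 3 |>.div_const 6))
      |>.congr_deriv (by simp only [Pi.pow_apply]; push_cast; ring)
  rw [integral_eq_sub_of_hasDerivAt hF (Continuous.intervalIntegrable (by fun_prop) _ _)]
  ring

theorem modified_reynolds_integral_identity_general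
    (h μ 𝒜 G U0 Uh : ℝ) (hh : 0 < h)
    (u u' u'' : ℝ → ℝ)
    (hu : ∀ y ∈ Set.Icc 0 h, HasDerivWithinAt u (u' y) (Set.Icc 0 h) y)
    (hu' : ∀ y ∈ Set.Icc 0 h, HasDerivWithinAt u' (u'' y) (Set.Icc 0 h) y)
    (hu'' : ContinuousOn u'' (Set.Icc 0 h))
    (hode : ∀ y ∈ Set.Icc 0 h, μ * u'' y + 𝒜 ^ 2 * μ ^ 2 * G * (u' y) ^ 2 = G)
    (hbc0 : u 0 = U0) (hbch : u h = Uh) :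
    2 * μ * (∫ y in (0:ℝ)..h, u y) - μ * h * (U0 + Uh)
        + 𝒜 ^ 2 * μ ^ 2 * G * (∫ y in (0:ℝ)..h, y * (y - h) * (u' y) ^ 2)
      = -(G * h ^ 3) / 6 := by
  rw [← uIcc_of_le hh.le] at hu hu' hu'' hode
  have hweighted_u'' : ∫ y in (0:ℝ)..h, y * (y - h) * u'' y
      = 2 * (∫ y in (0:ℝ)..h, u y) - h * (U0 + Uh) := by
    simpa only [sub_zero, hbc0, hbch] using
      integral_sub_mul_sub_mul_of_hasDerivWithinAt hu hu' hu''.intervalIntegrable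
  have hweight : ∫ y in (0:ℝ)..h, y * (y - h) = -h ^ 3 / 6 := by
    simpa only [sub_zero] using integral_sub_mul_sub 0 h
  have hw : Continuous fun y : ℝ => y * (y - h) := by fun_prop
  have hu'_cont : ContinuousOn u' [[0, h]] := fun y hy => (hu' y hy).continuousWithinAt
  have hint_u'' : IntervalIntegrable (fun y => y * (y - h) * u'' y) volume 0 h :=
    (hw.continuousOn.mul hu'').intervalIntegrable
  have hint_u'_sq : IntervalIntegrable (fun y => y * (y - h) * (u' y) ^ 2) volume 0 h :=
    (hw.continuousOn.mul (hu'_cont.pow 2)).intervalIntegrable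
  calc 2 * μ * (∫ y in (0:ℝ)..h, u y) - μ * h * (U0 + Uh)
        + 𝒜 ^ 2 * μ ^ 2 * G * (∫ y in (0:ℝ)..h, y * (y - h) * (u' y) ^ 2)
      = μ * (∫ y in (0:ℝ)..h, y * (y - h) * u'' y)
        + 𝒜 ^ 2 * μ ^ 2 * G * (∫ y in (0:ℝ)..h, y * (y - h) * (u' y) ^ 2) := by
        rw [hweighted_u'']; ring
    _ = ∫ y in (0:ℝ)..h,
          μ * (y * (y - h) * u'' y) + 𝒜 ^ 2 * μ ^ 2 * G * (y * (y - h) * (u' y) ^ 2) := by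
        rw [intervalIntegral.integral_add (hint_u''.const_mul _) (hint_u'_sq.const_mul _),
          intervalIntegral.integral_const_mul, intervalIntegral.integral_const_mul]
    _ = ∫ y in (0:ℝ)..h, G * (y * (y - h)) :=
        integral_congr fun y hy => by linear_combination (y * (y - h)) * hode y hy
    _ = -(G * h ^ 3) / 6 := by rw [intervalIntegral.integral_const_mul, hweight]; ring

/-- Multiplying the nonlinear ODE `μ u'' + 𝒜² μ² G (u')² = G` (equation (reyn1))
by `y (y − h)` and integrating over `[0, h]` gives
`2μ ∫₀ʰ u dy − μ h (U⁰ + Uʰ) + 𝒜² μ² G ∫₀ʰ y (y − h) (u')² dy = −G h³ / 6`. -/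
theorem modified_reynolds_integral_identity
    (h μ 𝒜 G U0 Uh : ℝ) (hh : 0 < h) (hμ : 0 < μ)
    (u u' u'' : ℝ → ℝ)
    (hu : ∀ y ∈ Set.Icc 0 h, HasDerivWithinAt u (u' y) (Set.Icc 0 h) y)
    (hu' : ∀ y ∈ Set.Icc 0 h, HasDerivWithinAt u' (u'' y) (Set.Icc 0 h) y)
    (hu'' : ContinuousOn u'' (Set.Icc 0 h))
    (hode : ∀ y ∈ Set.Icc 0 h, μ * u'' y + 𝒜 ^ 2 * μ ^ 2 * G * (u' y) ^ 2 = G)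
    (hbc0 : u 0 = U0) (hbch : u h = Uh) :
    2 * μ * (∫ y in (0:ℝ)..h, u y) - μ * h * (U0 + Uh)
        + 𝒜 ^ 2 * μ ^ 2 * G * (∫ y in (0:ℝ)..h, y * (y - h) * (u' y) ^ 2)
      = -(G * h ^ 3) / 6 :=
  modified_reynolds_integral_identity_general h μ 𝒜 G U0 Uh hh u u' u'' hu hu' hu'' hode hbc0 hbch
end

section
/- Let h, μ, p : ℝ → ℝ with h continuously differentiable and h(x) > 0 for all x, μ(x) > 0 for all x, p differentiable, let 𝒜, U⁰, Uʰ ∈ ℝ, and let u : ℝ × ℝ → ℝ be such that for each x the function y ↦ u(x,y) is twice continuously differentiable on [0,h(x)] and satisfies μ(x) ∂²u/∂y²(x,y) + 𝒜²μ(x)² p′(x) (∂u/∂y(x,y))² = p′(x) for all y ∈ [0,h(x)], with u(x,0) = U⁰ and u(x,h(x)) = Uʰ. If the flux x ↦ ∫₀^{h(x)} u(x,y) dy is constant in x, then the function x ↦ ( h(x)³/(12 μ(x)) − (𝒜² μ(x)/2) ∫₀^{h(x)} y (h(x) − y) (∂u/∂y(x,y))² dy ) · p′(x) is differentiable and its derivative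 equals (h′(x)/2)(U⁰ + Uʰ) for every x. -/
/-!
For a fixed `x`, integrating the kernel `y (h - y) / 2` against `u_yy` is the Peano-kernel form of
the error of the one-trapezoid rule, so it equals `(h/2)(U⁰ + Uʰ) - ∫₀ʰ u dy`. Substituting `u_yy`
from the ODE turns the same integral into the bracket of the theorem times `p'`. Hence that product
is `(h/2)(U⁰ + Uʰ)` minus the flux, and the flux does not depend on `x`.
-/

open Set MeasureTheory Interval

theorem trapezoidal_error_one_eq_integral {f f' f'' : ℝ → ℝ} {a b : ℝ}
    (hf : ∀ y ∈ [[a, b]], HasDerivWithinAt f (f' y) [[a, b]] y)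
    (hf' : ∀ y ∈ [[a, b]], HasDerivWithinAt f' (f'' y) [[a, b]] y)
    (hf'' : IntervalIntegrable f'' volume a b) :
    trapezoidal_error f 1 a b = ∫ y in a..b, (y - a) * (b - y) / 2 * f'' y := by
  have hw : ∀ y ∈ [[a, b]],
      HasDerivWithinAt (fun y => (y - a) * (b - y) / 2) ((a + b) / 2 - y) [[a, b]] y := by
    intro y _
    exact ((((hasDerivAt_id' y).sub_const a).mul ((hasDerivAt_id' y).const_sub b)).div_const 2
      |>.congr_deriv (by ring)).hasDerivWithinAt
  have hw' : ∀ y ∈ [[a, b]], HasDerivWithinAt (fun y => (a + b) / 2 - y) (-1) [[a, b]] y :=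
    fun y _ => ((hasDerivAt_id y).const_sub _).hasDerivWithinAt
  have hf'_int : IntervalIntegrable f' volume a b :=
    ContinuousOn.intervalIntegrable fun y hy => (hf' y hy).continuousWithinAt
  rw [intervalIntegral.integral_mul_deriv_eq_deriv_mul_of_hasDerivWithinAt hw hf'
      ((by fun_prop : Continuous fun y : ℝ => (a + b) / 2 - y).intervalIntegrable a b) hf'',
    intervalIntegral.integral_mul_deriv_eq_deriv_mul_of_hasDerivWithinAt hw' hf
      intervalIntegrable_const hf'_int]
  simp only [trapezoidal_error, trapezoidal_integral_one, neg_one_mul, intervalIntegral.integral_neg]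
  ring

theorem integral_mul_sub (b : ℝ) : ∫ y in (0 : ℝ)..b, y * (b - y) = b ^ 3 / 6 := by
  simp [mul_sub, intervalIntegral.integral_sub, integral_pow, ← sq]
  ring

theorem reynolds_coeff_mul_eq_trapezoidal_sub_integral {μ 𝒜 c b : ℝ} {u u' u'' : ℝ → ℝ}
    (hμ : μ ≠ 0)
    (hu : ∀ y ∈ [[0, b]], HasDerivWithinAt u (u' y) [[0, b]] y)
    (hu' : ∀ y ∈ [[0, b]], HasDerivWithinAt u' (u'' y) [[0, b]] y)
    (hu'' : IntervalIntegrable u'' volume 0 b)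
    (hode : ∀ y ∈ [[0, b]], μ * u'' y + 𝒜 ^ 2 * μ ^ 2 * c * u' y ^ 2 = c) :
    (b ^ 3 / (12 * μ) - 𝒜 ^ 2 * μ / 2 * ∫ y in (0 : ℝ)..b, y * (b - y) * u' y ^ 2) * c
      = b / 2 * (u 0 + u b) - ∫ y in (0 : ℝ)..b, u y := by
  have hkernel := trapezoidal_error_one_eq_integral hu hu' hu''
  rw [trapezoidal_error, trapezoidal_integral_one, sub_zero] at hkernel
  have hode_kernel : ∀ y ∈ [[0, b]], (y - 0) * (b - y) / 2 * u'' y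
      = c / (2 * μ) * (y * (b - y)) - 𝒜 ^ 2 * μ * c / 2 * (y * (b - y) * u' y ^ 2) := by
    intro y hy
    have hu''_eq : u'' y = (c - 𝒜 ^ 2 * μ ^ 2 * c * u' y ^ 2) / μ := by
      rw [eq_div_iff hμ]; linarith [hode y hy]
    rw [hu''_eq]; field_simp; ring
  have hu'_cont : ContinuousOn u' [[0, b]] := fun y hy => (hu' y hy).continuousWithinAt
  rw [hkernel, intervalIntegral.integral_congr hode_kernel, intervalIntegral.integral_sub,
    intervalIntegral.integral_const_mul, intervalIntegral.integral_const_mul, integral_mul_sub]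
  · field_simp; ring
  · exact (by fun_prop : Continuous fun y : ℝ => c / (2 * μ) * (y * (b - y))).intervalIntegrable _ _
  · exact ContinuousOn.intervalIntegrable (by fun_prop)

theorem modified_reynolds_equation_general
    (h μ p : ℝ → ℝ) (hh : ContDiff ℝ 1 h) (hpos : ∀ x, 0 < h x)
    (hμpos : ∀ x, 0 < μ x)
    (𝒜 U0 Uh : ℝ) (u uy uyy : ℝ → ℝ → ℝ)
    (hu : ∀ x, ∀ y ∈ Set.Icc 0 (h x), HasDerivWithinAt (u x) (uy x y) (Set.Icc 0 (h x)) y)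
    (huy : ∀ x, ∀ y ∈ Set.Icc 0 (h x), HasDerivWithinAt (uy x) (uyy x y) (Set.Icc 0 (h x)) y)
    (huyy : ∀ x, ContinuousOn (uyy x) (Set.Icc 0 (h x)))
    (hode : ∀ x, ∀ y ∈ Set.Icc 0 (h x),
      μ x * uyy x y + 𝒜 ^ 2 * μ x ^ 2 * deriv p x * (uy x y) ^ 2 = deriv p x)
    (hbc0 : ∀ x, u x 0 = U0) (hbch : ∀ x, u x (h x) = Uh)
    (hflux : ∀ x₁ x₂, (∫ y in (0:ℝ)..h x₁, u x₁ y) = ∫ y in (0:ℝ)..h x₂, u x₂ y) :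
    ∀ x, HasDerivAt
      (fun x => (h x ^ 3 / (12 * μ x)
          - 𝒜 ^ 2 * μ x / 2 * ∫ y in (0:ℝ)..h x, y * (h x - y) * (uy x y) ^ 2) * deriv p x)
      (deriv h x / 2 * (U0 + Uh)) x := by
  have hslice : ∀ x, (h x ^ 3 / (12 * μ x)
      - 𝒜 ^ 2 * μ x / 2 * ∫ y in (0:ℝ)..h x, y * (h x - y) * (uy x y) ^ 2) * deriv p x
      = h x / 2 * (U0 + Uh) - ∫ y in (0:ℝ)..h x, u x y := by
    intro x
    have hI : Icc 0 (h x) = [[0, h x]] := (uIcc_of_le (hpos x).le).symm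
    rw [← hbc0 x, ← hbch x]
    exact reynolds_coeff_mul_eq_trapezoidal_sub_integral (hμpos x).ne' (hI ▸ hu x) (hI ▸ huy x)
      (hI ▸ huyy x).intervalIntegrable (hI ▸ hode x)
  intro x
  refine HasDerivAt.congr_of_eventuallyEq ?_
    (Filter.Eventually.of_forall fun x' => (hslice x').trans (by rw [hflux x' x]))
  exact ((hh.differentiable one_ne_zero x).hasDerivAt.div_const 2 |>.mul_const _).sub_const _

/-- The modified (nonlinear) Reynolds equation for the piezoviscous regime
`α = O(ε)`: if for each `x` the profile `y ↦ u x y` solves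
`μ x · u_yy + 𝒜² μ x ² p' x · (u_y)² = p' x` on `[0, h x]` with `u x 0 = U⁰`,
`u x (h x) = Uʰ`, and the flux `x ↦ ∫₀^{h x} u x y dy` is constant, then
`d/dx [ ( h³/(12μ) − (𝒜² μ / 2) ∫₀ʰ y (h − y) (u_y)² dy ) p' ]
  = (h'/2)(U⁰ + Uʰ)`. -/
theorem modified_reynolds_equation
    (h μ p : ℝ → ℝ) (hh : ContDiff ℝ 1 h) (hpos : ∀ x, 0 < h x)
    (hμpos : ∀ x, 0 < μ x) (hp : Differentiable ℝ p)
    (𝒜 U0 Uh : ℝ) (u uy uyy : ℝ → ℝ → ℝ)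
    (hu : ∀ x, ∀ y ∈ Set.Icc 0 (h x), HasDerivWithinAt (u x) (uy x y) (Set.Icc 0 (h x)) y)
    (huy : ∀ x, ∀ y ∈ Set.Icc 0 (h x), HasDerivWithinAt (uy x) (uyy x y) (Set.Icc 0 (h x)) y)
    (huyy : ∀ x, ContinuousOn (uyy x) (Set.Icc 0 (h x)))
    (hode : ∀ x, ∀ y ∈ Set.Icc 0 (h x),
      μ x * uyy x y + 𝒜 ^ 2 * μ x ^ 2 * deriv p x * (uy x y) ^ 2 = deriv p x)
    (hbc0 : ∀ x, u x 0 = U0) (hbch : ∀ x, u x (h x) = Uh)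
    (hflux : ∀ x₁ x₂, (∫ y in (0:ℝ)..h x₁, u x₁ y) = ∫ y in (0:ℝ)..h x₂, u x₂ y) :
    ∀ x, HasDerivAt
      (fun x => (h x ^ 3 / (12 * μ x)
          - 𝒜 ^ 2 * μ x / 2 * ∫ y in (0:ℝ)..h x, y * (h x - y) * (uy x y) ^ 2) * deriv p x)
      (deriv h x / 2 * (U0 + Uh)) x :=
  modified_reynolds_equation_general h μ p hh hpos hμpos 𝒜 U0 Uh u uy uyy hu huy huyy hode hbc0 hbch
    hflux
end

section
/- Let h > 0, μ > 0 and 𝒜 ∈ ℝ, and let u : [0,h] → ℝ be continuously differentiable with (𝒜 μ u′(y))² < 1 for all y ∈ [0,h]. Then h³/(12μ) − (𝒜² μ / 2) ∫₀ʰ y (h − y) (u′(y))² dy > 0. -/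
/-! The weight `y (h - y)` is nonnegative on `[0, h]` and has integral `h³/6`, so the bound
`(𝒜 μ u')² < 1` gives `(𝒜² μ / 2) ∫₀ʰ y (h − y) (u')² = (1 / 2μ) ∫₀ʰ y (h − y) (𝒜 μ u')² < h³/(12 μ)`.
The inequality is strict because the weight is positive at `h / 2`. -/

open Set intervalIntegral

theorem integral_mul_sub_self (h : ℝ) : ∫ y in (0:ℝ)..h, y * (h - y) = h ^ 3 / 6 := by
  have hexpand : (fun y : ℝ => y * (h - y)) = fun y => h * y - y ^ 2 := by
    funext y; ring
  rw [hexpand, integral_sub ((continuous_const_mul h).intervalIntegrable _ _)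
    ((continuous_pow 2).intervalIntegrable _ _), integral_const_mul, integral_id, integral_pow]
  ring

theorem integral_mul_lt_integral_of_lt_one {a b : ℝ} (hab : a < b) {w g : ℝ → ℝ}
    (hw : ContinuousOn w (Icc a b)) (hg : ContinuousOn g (Icc a b))
    (hw_nonneg : ∀ x ∈ Icc a b, 0 ≤ w x) (hw_pos : ∃ c ∈ Icc a b, 0 < w c)
    (hg_lt : ∀ x ∈ Icc a b, g x < 1) :
    ∫ x in a..b, w x * g x < ∫ x in a..b, w x := by
  refine integral_lt_integral_of_continuousOn_of_le_of_exists_lt hab (hw.mul hg) hw ?_ ?_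
  · intro x hx
    have hx' : x ∈ Icc a b := Ioc_subset_Icc_self hx
    simpa using mul_le_mul_of_nonneg_left (hg_lt x hx').le (hw_nonneg x hx')
  · obtain ⟨c, hc, hwc⟩ := hw_pos
    exact ⟨c, hc, by simpa using mul_lt_mul_of_pos_left (hg_lt c hc) hwc⟩

theorem modified_reynolds_ellipticity_general
    (h μ 𝒜 : ℝ) (hh : 0 < h) (hμ : 0 < μ)
    (u' : ℝ → ℝ)
    (hu' : ContinuousOn u' (Set.Icc 0 h))
    (hbound : ∀ y ∈ Set.Icc 0 h, (𝒜 * μ * u' y) ^ 2 < 1) :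
    0 < h ^ 3 / (12 * μ) - 𝒜 ^ 2 * μ / 2 * ∫ y in (0:ℝ)..h, y * (h - y) * (u' y) ^ 2 := by
  have hrescale : 𝒜 ^ 2 * μ / 2 * ∫ y in (0:ℝ)..h, y * (h - y) * (u' y) ^ 2
      = (2 * μ)⁻¹ * ∫ y in (0:ℝ)..h, y * (h - y) * (𝒜 * μ * u' y) ^ 2 := by
    rw [← integral_const_mul, ← integral_const_mul]
    congr 1 with y
    field_simp
  have hweighted : ∫ y in (0:ℝ)..h, y * (h - y) * (𝒜 * μ * u' y) ^ 2 < h ^ 3 / 6 := by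
    rw [← integral_mul_sub_self h]
    refine integral_mul_lt_integral_of_lt_one hh (by fun_prop) (by fun_prop)
      (fun y hy => mul_nonneg hy.1 (sub_nonneg.2 hy.2)) ⟨h / 2, ?_, ?_⟩ hbound
    · constructor <;> linarith
    · nlinarith
  rw [hrescale, sub_pos]
  calc (2 * μ)⁻¹ * ∫ y in (0:ℝ)..h, y * (h - y) * (𝒜 * μ * u' y) ^ 2
      < (2 * μ)⁻¹ * (h ^ 3 / 6) := by gcongr
    _ = h ^ 3 / (12 * μ) := by field_simp; ring

/-- Ellipticity of the modified Reynolds equation: if the shear stress is below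
the reciprocal of the pressure–viscosity coefficient, i.e. `(𝒜 μ u')² < 1` on
`[0, h]`, then the diffusion coefficient
`h³/(12μ) − (𝒜² μ / 2) ∫₀ʰ y (h − y) (u')² dy` is positive. -/
theorem modified_reynolds_ellipticity
    (h μ 𝒜 : ℝ) (hh : 0 < h) (hμ : 0 < μ)
    (u u' : ℝ → ℝ)
    (hu : ∀ y ∈ Set.Icc 0 h, HasDerivWithinAt u (u' y) (Set.Icc 0 h) y)
    (hu' : ContinuousOn u' (Set.Icc 0 h))
    (hbound : ∀ y ∈ Set.Icc 0 h, (𝒜 * μ * u' y) ^ 2 < 1) :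
    0 < h ^ 3 / (12 * μ) - 𝒜 ^ 2 * μ / 2 * ∫ y in (0:ℝ)..h, y * (h - y) * (u' y) ^ 2 :=
  modified_reynolds_ellipticity_general h μ 𝒜 hh hμ u' hu' hbound
end
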